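/- There exists a universal constant C > 0 such that the following holds. Let X be a finite, connected, undirected graph with at least two vertices such that |B(x,R)| = |B(y,R)| for all vertices x, y ∈ V and all R ≥ 0 (for instance, X vertex-transitive). Then for every vertex x ∈ V and every ε ∈ (0,1), |B(x, ε·diam(X))| ≤ C·(1 + ε·|V|). -/

import Mathlib

open Finset

/-- The closed ball of radius `R` (a real number) about `x` in the shortest-path metric
of the graph `G`. -/
noncomputable def gball {V : Type} [Fintype V] (G : SimpleGraph V) (x : V) (R : ℝ) : Finset V :=
  @Finset.filter _ (fun y => (G.dist x y : ℝ) ≤ R) (Classical.decPred _) Finset.univ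

/-- The diameter of the graph `G` in the shortest-path metric. -/
noncomputable def gdiam {V : Type} [Fintype V] (G : SimpleGraph V) : ℕ :=
  Finset.univ.sup fun p : V × V => G.dist p.1 p.2

/-!
Let `r = ⌊ε · diam X⌋` and let `u, v` realize the diameter `D`. Along a geodesic from `u` to `v`
the vertices at distance `0, 2r+1, 2(2r+1), …` from `u` are `⌊D/(2r+1)⌋ + 1 ≥ (D+1)/(2r+1)`
centres of pairwise disjoint `r`-balls, which by hypothesis all have the size of `B(x, r)`.
Hence `|B(x,r)| (D+1) ≤ |V| (2r+1) ≤ 3 r |V| ≤ 3 ε D |V|`, so `|B(x,r)| ≤ 3 ε |V|` when `r ≥ 1`,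
while `B(x,0) = {x}`.
-/

namespace SimpleGraph.Walk

variable {V : Type} {G : SimpleGraph V}

lemma dist_getVert_of_length_eq_dist {u v : V} (p : G.Walk u v) (hp : p.length = G.dist u v)
    {n : ℕ} (hn : n ≤ p.length) : G.dist u (p.getVert n) = n := by
  have h_take : G.dist u (p.getVert n) ≤ n := by
    simpa [hn] using dist_le (p.take n)
  have h_drop : G.dist (p.getVert n) v ≤ p.length - n := by
    simpa using dist_le (p.drop n)
  have h_triangle := (p.take n).reachable.dist_triangle_left (w := v)
  omega

end SimpleGraph.Walk

section

variable {V : Type} [Fintype V] {G : SimpleGraph V}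

@[simp]
lemma mem_gball {x y : V} {R : ℝ} : y ∈ gball G x R ↔ (G.dist x y : ℝ) ≤ R := by
  simp [gball]

lemma gball_eq_gball_floor (x : V) {R : ℝ} (hR : 0 ≤ R) : gball G x R = gball G x ⌊R⌋₊ := by
  ext y
  rw [mem_gball, mem_gball, Nat.cast_le, Nat.le_floor_iff hR]

lemma gball_zero (hG : G.Connected) (x : V) : gball G x 0 = {x} := by
  ext y
  simp [hG.dist_eq_zero_iff, eq_comm]

lemma exists_dist_eq_gdiam [Nonempty V] : ∃ u v : V, G.dist u v = gdiam G := by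
  obtain ⟨⟨u, v⟩, -, huv⟩ :=
    exists_mem_eq_sup univ univ_nonempty fun p : V × V => G.dist p.1 p.2
  exact ⟨u, v, huv.symm⟩

lemma SimpleGraph.Connected.dist_lt_add_of_mem_gball (hG : G.Connected) (u : V) {a b y : V}
    {r : ℕ} (ha : y ∈ gball G a r) (hb : y ∈ gball G b r) :
    G.dist u b < G.dist u a + (2 * r + 1) := by
  rw [mem_gball, Nat.cast_le] at ha hb
  have h_ub := hG.dist_triangle (u := u) (v := a) (w := b)
  have h_ab := hG.dist_triangle (u := a) (v := y) (w := b)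
  rw [SimpleGraph.dist_comm (u := y)] at h_ab
  omega

theorem card_gball_mul_gdiam_succ_le (hG : G.Connected) {x : V} {r : ℕ}
    (hball : ∀ y, #(gball G y r) = #(gball G x r)) :
    #(gball G x r) * (gdiam G + 1) ≤ Fintype.card V * (2 * r + 1) := by
  classical
  set a := 2 * r + 1
  set k := gdiam G / a
  have : Nonempty V := ⟨x⟩
  obtain ⟨u, v, huv⟩ := exists_dist_eq_gdiam (G := G)
  obtain ⟨p, hp⟩ := hG.exists_walk_length_eq_dist u v
  set c : ℕ → V := fun m => p.getVert (m * a)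
  have hc : ∀ m < k + 1, G.dist u (c m) = m * a := fun m hm =>
    p.dist_getVert_of_length_eq_dist hp <| calc
      m * a ≤ k * a := Nat.mul_le_mul_right a (Nat.le_of_lt_succ hm)
      _ ≤ gdiam G := Nat.div_mul_le_self _ a
      _ = p.length := by rw [hp, huv]
  have hdisj : (range (k + 1) : Set ℕ).PairwiseDisjoint fun m => gball G (c m) r := by
    intro m hm m' hm' hne
    rw [Function.onFun, disjoint_left]
    intro y hy hy'
    have h₁ := hG.dist_lt_add_of_mem_gball u hy hy'
    have h₂ := hG.dist_lt_add_of_mem_gball u hy' hy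
    rw [hc m (mem_range.mp hm), hc m' (mem_range.mp hm'), ← add_one_mul] at h₁ h₂
    have := Nat.lt_of_mul_lt_mul_right h₁
    have := Nat.lt_of_mul_lt_mul_right h₂
    omega
  have hcount : (k + 1) * #(gball G x r) ≤ Fintype.card V := calc
    (k + 1) * #(gball G x r) = ∑ m ∈ range (k + 1), #(gball G (c m) r) := by simp [hball]
    _ = #((range (k + 1)).biUnion fun m => gball G (c m) r) := (card_biUnion hdisj).symm
    _ ≤ Fintype.card V := card_le_univ _
  have hdiam : gdiam G + 1 ≤ (k + 1) * a := by
    have h_div : a * k + gdiam G % a = gdiam G := Nat.div_add_mod _ _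
    have h_mod : gdiam G % a < a := Nat.mod_lt _ (Nat.succ_pos _)
    rw [add_one_mul, mul_comm]
    omega
  calc #(gball G x r) * (gdiam G + 1) ≤ #(gball G x r) * ((k + 1) * a) :=
        Nat.mul_le_mul_left _ hdiam
    _ = (k + 1) * #(gball G x r) * a := by ring
    _ ≤ Fintype.card V * a := Nat.mul_le_mul_right a hcount

end

/-- there is a universal constant `C > 0` such that in every finite connected
graph with at least two vertices in which all balls of equal radii have equal cardinality
(e.g. a vertex-transitive graph), for every vertex `x` and `ε ∈ (0,1)`,
`|B(x, ε·diam(X))| ≤ C·(1 + ε·|V|)`. -/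
theorem small_ball_cardinality_bound_symmetric :
    ∃ C : ℝ, 0 < C ∧
      ∀ (V : Type) [Fintype V] (G : SimpleGraph V),
        G.Connected →
        2 ≤ Fintype.card V →
        -- balls of equal radii have equal cardinality
        (∀ (x y : V) (R : ℝ), 0 ≤ R → (gball G x R).card = (gball G y R).card) →
        ∀ (x : V) (ε : ℝ), 0 < ε → ε < 1 →
          ((gball G x (ε * (gdiam G : ℝ))).card : ℝ)
            ≤ C * (1 + ε * (Fintype.card V : ℝ)) := by
  refine ⟨3, by norm_num, ?_⟩
  intro V _ G hG _ hball x ε hε _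
  have hεD : 0 ≤ ε * gdiam G := by positivity
  have hεV : 0 ≤ ε * Fintype.card V := by positivity
  rw [gball_eq_gball_floor x hεD]
  set r := ⌊ε * gdiam G⌋₊
  obtain hr | hr := Nat.eq_zero_or_pos r
  · rw [hr, Nat.cast_zero, gball_zero hG, card_singleton, Nat.cast_one]
    linarith
  have hpack : (#(gball G x r) : ℝ) * (gdiam G + 1) ≤ Fintype.card V * (2 * r + 1) := by
    exact_mod_cast card_gball_mul_gdiam_succ_le hG fun y => hball y x r (Nat.cast_nonneg r)
  have hrD : (r : ℝ) ≤ ε * gdiam G := Nat.floor_le hεD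
  have hr : (1 : ℝ) ≤ r := by exact_mod_cast hr
  have hbound : (#(gball G x r) : ℝ) ≤ 3 * (ε * Fintype.card V) := by
    refine le_of_mul_le_mul_right (hpack.trans ?_) (by positivity : (0 : ℝ) < gdiam G + 1)
    nlinarith [(by positivity : (0 : ℝ) ≤ Fintype.card V)]
  linarith
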